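/- arXiv:1811.02995 — 2 statements merged into one kernel-verified Lean document; each statement's English description precedes it below -/
import Mathlib

section
/- Let Γ be a two-ended highly-arc-transitive digraph of out-valency 2 with fibre size m > 2. Then the stabilizer of a vertex in Aut(Γ) is an elementary abelian 2-group (isomorphic to (Z_2)^Z). -/
variable {V : Type*}

/-- The automorphism group of a digraph given by its arc relation `E`. -/
def autGroup (E : V → V → Prop) : Subgroup (Equiv.Perm V) where
  carrier := {g | ∀ u v : V, E u v ↔ E (g u) (g v)}
  one_mem' := by intro u v; simp
  mul_mem' := by
    intro a b ha hb u v
    simpa [Equiv.Perm.mul_apply] using (hb u v).trans (ha (b u) (b v))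
  inv_mem' := by
    intro a ha u v
    simpa using (ha (a⁻¹ u) (a⁻¹ v)).symm

/-- Connectedness of a digraph (in the underlying undirected sense). -/
def DConnected (E : V → V → Prop) : Prop :=
  ∀ u v : V, Relation.ReflTransGen (fun a b => E a b ∨ E b a) u v

/-- `f : Fin (k+1) → V` is a `k`-arc. -/
def IsKArc (E : V → V → Prop) (k : ℕ) (f : Fin (k + 1) → V) : Prop :=
  ∀ i : Fin k, E (f i.castSucc) (f i.succ)

def KArcTransitive (E : V → V → Prop) (k : ℕ) : Prop :=
  ∀ f g : Fin (k + 1) → V, IsKArc E k f → IsKArc E k g →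
    ∃ a ∈ autGroup E, ∀ i, (a : Equiv.Perm V) (f i) = g i

def HighlyArcTransitive (E : V → V → Prop) : Prop :=
  ∀ k : ℕ, KArcTransitive E k

def VertexTransitive (E : V → V → Prop) : Prop :=
  ∀ u v : V, ∃ a ∈ autGroup E, (a : Equiv.Perm V) u = v

def ArcTransitive (E : V → V → Prop) : Prop :=
  ∀ u v x y : V, E u v → E x y →
    ∃ a ∈ autGroup E, (a : Equiv.Perm V) u = x ∧ (a : Equiv.Perm V) v = y

/-- Reachability in the underlying undirected graph avoiding the vertex set `S`. -/
def ReachAvoid (E : V → V → Prop) (S : Set V) : V → V → Prop :=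
  Relation.ReflTransGen (fun a b => (E a b ∨ E b a) ∧ a ∉ S ∧ b ∉ S)

/-- `u` lies in an infinite component of the complement of `S`. -/
def InfComp (E : V → V → Prop) (S : Set V) (u : V) : Prop :=
  u ∉ S ∧ {w | ReachAvoid E S u w}.Infinite

/-- A connected digraph with exactly two ends. -/
def TwoEnded (E : V → V → Prop) : Prop :=
  DConnected E ∧
  (∀ S : Set V, S.Finite → ∀ u v w : V, InfComp E S u → InfComp E S v → InfComp E S w →
    ReachAvoid E S u v ∨ ReachAvoid E S u w ∨ ReachAvoid E S v w) ∧
  ∃ S : Set V, S.Finite ∧ ∃ u v : V, InfComp E S u ∧ InfComp E S v ∧ ¬ ReachAvoid E S u v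

/-- The stabilizer of a vertex `v` in the automorphism group. -/
def vStab (E : V → V → Prop) (v : V) : Subgroup (autGroup E) where
  carrier := {g | (g : Equiv.Perm V) v = v}
  one_mem' := rfl
  mul_mem' := by
    intro a b ha hb
    simp only [Set.mem_setOf_eq] at *
    simp [Subgroup.coe_mul, Equiv.Perm.mul_apply, ha, hb]
  inv_mem' := by
    intro a ha
    simp only [Set.mem_setOf_eq] at *
    have := congrArg (((a : Equiv.Perm V))⁻¹ : Equiv.Perm V) ha
    simpa using this.symm

def outSet (E : V → V → Prop) (v : V) : Set V := {u | E v u}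
def inSet (E : V → V → Prop) (v : V) : Set V := {u | E u v}

/-- The stabilizer of `v` acts quasi-primitively on the set `Ω`. -/
def QuasiPrimitivelyOn (E : V → V → Prop) (v : V) (Ω : Set V) : Prop :=
  (∀ u ∈ Ω, ∀ w ∈ Ω, ∃ g ∈ vStab E v, ((g : autGroup E) : Equiv.Perm V) u = w) ∧
  (∀ N : Subgroup (vStab E v), N.Normal →
    (∀ n ∈ N, ∀ u ∈ Ω, (((n : vStab E v) : autGroup E) : Equiv.Perm V) u = u) ∨
    (∀ u ∈ Ω, ∀ w ∈ Ω, ∃ n ∈ N, (((n : vStab E v) : autGroup E) : Equiv.Perm V) u = w))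

/-!
Highly-arc-transitivity forces in-twins, distinct vertices with the same in-neighbours. Without
them an automorphism would be determined on the levels above a fibre by its action on that
fibre; but the automorphisms fixing a vertex act transitively on its `2 ^ n` outgoing `n`-arcs,
which is too many once `2 ^ n > m ^ m`.

Identifying in-twins gives a digraph of the same kind with smaller fibres. For `m > 2` a vertex
is determined by its class and the class of its out-neighbours, so the digraph is the line
digraph of the quotient and both have isomorphic groups of level-preserving automorphisms. By
induction this group is the one for `m = 2`, where it consists of the independent swaps of the
two vertices of each fibre: an elementary abelian `2`-group of cardinality `2 ^ ℵ₀`. A vertex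
stabiliser has finite index in it, so it is elementary abelian of the same cardinality, that is,
isomorphic to `(ℤ/2)^ℤ`.
-/

open Cardinal

universe u v

lemma Set.eq_pair_of_ncard_eq_two {α : Type*} {s : Set α} {a b : α} (hs : s.ncard = 2)
    (ha : a ∈ s) (hb : b ∈ s) (hab : a ≠ b) : s = {a, b} :=
  (Set.eq_of_subset_of_ncard_le (Set.pair_subset ha hb) (by rw [hs, Set.ncard_pair hab])
    (Set.finite_of_ncard_ne_zero (by omega))).symm

lemma Module.rank_eq_mk_of_finite_of_infinite {K : Type u} {M : Type v} [Field K] [Finite K]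
    [AddCommGroup M] [Module K M] [Infinite M] : Module.rank K M = #M := by
  let b := Module.Free.chooseBasis K M
  have : Infinite (Module.Free.ChooseBasisIndex K M) := by
    by_contra hfin
    have : Finite (Module.Free.ChooseBasisIndex K M) := not_infinite_iff_finite.mp hfin
    have : Module.Finite K M := Module.Finite.of_basis b
    exact not_finite_iff_infinite.mpr ‹Infinite M› (Module.finite_of_finite K)
  have h := lift_mk_eq'.mpr ⟨b.repr.toEquiv⟩
  rw [mk_finsupp_lift_of_infinite] at h
  have hK : lift.{v} #K ≤ lift.{u} #(Module.Free.ChooseBasisIndex K M) :=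
    (lift_le_aleph0.mpr mk_le_aleph0).trans (by simp)
  rw [max_eq_left hK, lift_lift, lift_umax_eq, lift_id, lift_id] at h
  rw [Module.Free.rank_eq_card_chooseBasisIndex, h]

lemma mul_comm_of_mul_self_eq_one {G : Type*} [Group G] (h : ∀ g : G, g * g = 1) (a b : G) :
    a * b = b * a := by
  have hinv : ∀ g : G, g⁻¹ = g := fun g => inv_eq_of_mul_eq_one_right (h g)
  rw [← hinv (a * b), mul_inv_rev, hinv, hinv]

lemma nonempty_mulEquiv_of_mul_self_eq_one {G : Type u} [Group G] (h : ∀ g : G, g * g = 1)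
    (hG : #G = 𝔠) : Nonempty (G ≃* (ℤ → Multiplicative (ZMod 2))) := by
  let _ : CommGroup G := { mul_comm := mul_comm_of_mul_self_eq_one h }
  let _ : Module (ZMod 2) (Additive G) := AddCommGroup.zmodModule fun x => by
    rw [two_nsmul]; exact h x.toMul
  have : Infinite G := infinite_iff.mpr (hG ▸ aleph0_le_continuum)
  have hrank : Module.rank (ZMod 2) (Additive G) = 𝔠 := by
    rw [Module.rank_eq_mk_of_finite_of_infinite]; exact hG
  have hrank' : Module.rank (ZMod 2) (ℤ → ZMod 2) = 𝔠 := by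
    rw [rank_fun_infinite, ← power_def, mk_int, mk_fintype, ZMod.card]
    simp
  obtain ⟨e⟩ := nonempty_linearEquiv_of_lift_rank_eq (R := ZMod 2) (M := Additive G)
    (M' := ℤ → ZMod 2) (by rw [hrank, hrank', lift_continuum, lift_continuum])
  exact ⟨(AddEquiv.toMultiplicativeRight e.toAddEquiv).trans (MulEquiv.funMultiplicative ℤ _)⟩

lemma mk_stabilizer_eq_of_finite_orbit {H α : Type*} [Group H] [MulAction H α] {x : α}
    (hx : (MulAction.orbit H x).Finite) (hH : ℵ₀ ≤ #H) : #(MulAction.stabilizer H x) = #H := by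
  let S := MulAction.stabilizer H x
  have : Finite (H ⧸ S) := (MulAction.orbitEquivQuotientStabilizer H x).finite_iff.mp hx.to_subtype
  have hprod : #H = #(H ⧸ S) * #S := by
    rw [← lift_id #(H ⧸ S), ← lift_id #S, ← mk_prod]
    exact mk_congr Subgroup.groupEquivQuotientProdSubgroup
  have hS : ℵ₀ ≤ #S := by
    by_contra! h
    exact (hH.trans_lt (hprod ▸ mul_lt_aleph0 (lt_aleph0_of_finite _) h)).false
  rw [hprod, mul_eq_right hS ((lt_aleph0_of_finite _).le.trans hS) (mk_ne_zero _)]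

section Digraph

variable {E : V → V → Prop}

lemma image_inSet_of_mem_autGroup {g : Equiv.Perm V} (hg : g ∈ autGroup E) (v : V) :
    g '' inSet E v = inSet E (g v) := by
  ext w
  rw [Equiv.image_eq_preimage_symm, Set.mem_preimage]
  exact (hg _ v).trans (by rw [Equiv.apply_symm_apply]; rfl)

lemma HighlyArcTransitive.vertexTransitive (h : HighlyArcTransitive E) : VertexTransitive E :=
  fun u v => by
    obtain ⟨a, ha, hav⟩ := h 0 (fun _ => u) (fun _ => v) Fin.elim0 Fin.elim0
    exact ⟨a, ha, hav 0⟩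

lemma VertexTransitive.ncard_inSet_eq (h : VertexTransitive E) (u v : V) :
    (inSet E u).ncard = (inSet E v).ncard := by
  obtain ⟨a, ha, rfl⟩ := h u v
  rw [← image_inSet_of_mem_autGroup ha, Set.ncard_image_of_injective _ a.injective]

variable {φ : V → ℤ}

lemma sub_eq_sub_of_mem_autGroup (hc : DConnected E) (hφ : ∀ u v, E u v → φ v = φ u + 1)
    {g : Equiv.Perm V} (hg : g ∈ autGroup E) (x y : V) :
    φ (g x) - φ x = φ (g y) - φ y := by
  induction hc x y with
  | refl => rfl
  | tail _ hstep ih =>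
    rcases hstep with h | h
    · have := hφ _ _ h; have := hφ _ _ ((hg _ _).mp h); omega
    · have := hφ _ _ h; have := hφ _ _ ((hg _ _).mp h); omega

lemma VertexTransitive.ncard_fibre_eq (hvt : VertexTransitive E) (hc : DConnected E)
    (hφ : ∀ u v, E u v → φ v = φ u + 1) (hsurj : Function.Surjective φ) (i j : ℤ) :
    (φ ⁻¹' {i}).ncard = (φ ⁻¹' {j}).ncard := by
  obtain ⟨x, rfl⟩ := hsurj i
  obtain ⟨y, rfl⟩ := hsurj j
  obtain ⟨a, ha, rfl⟩ := hvt x y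
  rw [← Set.ncard_image_of_injective _ a.injective]
  congr 1
  ext w
  have := sub_eq_sub_of_mem_autGroup hc hφ ha x (a.symm w)
  simp only [Equiv.image_eq_preimage_symm, Set.mem_preimage, Set.mem_singleton_iff,
    Equiv.apply_symm_apply] at this ⊢
  constructor <;> intro <;> omega

/-- Double counting the arcs between two consecutive fibres. -/
lemma VertexTransitive.ncard_inSet_eq_of_ncard_outSet (hvt : VertexTransitive E)
    (hφ : ∀ u v, E u v → φ v = φ u + 1) {d m : ℕ} (hout : ∀ v, (outSet E v).ncard = d)
    (hfib : ∀ i, (φ ⁻¹' {i}).ncard = m) (hm : m ≠ 0) (v : V) : (inSet E v).ncard = d := by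
  classical
  have hfin : ∀ i, (φ ⁻¹' {i}).Finite := fun i =>
    Set.finite_of_ncard_ne_zero (by rw [hfib]; exact hm)
  set A := (hfin (φ v - 1)).toFinset
  set B := (hfin (φ v)).toFinset
  have hA : ∀ a ∈ A, (B.bipartiteAbove E a).card = d := by
    intro a ha
    rw [← hout a, ← Set.ncard_coe_finset]
    congr 1
    ext w
    simp only [Finset.coe_bipartiteAbove, A, B, Set.Finite.mem_toFinset,
      Set.mem_preimage, Set.mem_singleton_iff] at ha ⊢
    exact ⟨fun h => h.2, fun h => ⟨by rw [hφ a w h, ha]; ring, h⟩⟩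
  have hB : ∀ b ∈ B, (A.bipartiteBelow E b).card = (inSet E v).ncard := by
    intro b hb
    rw [hvt.ncard_inSet_eq v b, ← Set.ncard_coe_finset]
    congr 1
    ext w
    simp only [Finset.coe_bipartiteBelow, A, B, Set.Finite.mem_toFinset,
      Set.mem_preimage, Set.mem_singleton_iff] at hb ⊢
    exact ⟨fun h => h.2, fun h => ⟨by rw [← hb, hφ w b h]; ring, h⟩⟩
  have := Finset.card_mul_eq_card_mul E hA hB
  rw [← Set.ncard_eq_toFinset_card _ (hfin _), ← Set.ncard_eq_toFinset_card _ (hfin _), hfib,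
    hfib] at this
  exact (Nat.eq_of_mul_eq_mul_left (Nat.pos_of_ne_zero hm) this).symm

lemma IsKArc.map_apply (hφ : ∀ u v, E u v → φ v = φ u + 1) {k : ℕ} {f : Fin (k + 1) → V}
    (hf : IsKArc E k f) (i : Fin (k + 1)) : φ (f i) = φ (f 0) + i := by
  induction i using Fin.induction with
  | zero => simp
  | succ i ih =>
    rw [hφ _ _ (hf i), ih, Fin.val_succ, Fin.val_castSucc]
    push_cast
    ring

def walk (nb : V → Bool → V) (v : V) (s : ℕ → Bool) : ℕ → V
  | 0 => v
  | k + 1 => nb (walk nb v s k) (s k)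

lemma exists_injective_kArcs (hout : ∀ v, ∃ w₀ w₁, w₀ ≠ w₁ ∧ E v w₀ ∧ E v w₁) (n : ℕ) (v : V) :
    ∃ f : (Fin n → Bool) → Fin (n + 1) → V, Function.Injective f ∧
      ∀ s, IsKArc E n (f s) ∧ f s 0 = v := by
  choose w₀ w₁ hne h₀ h₁ using hout
  let nb : V → Bool → V := fun x b => cond b (w₁ x) (w₀ x)
  have hnb : ∀ x b, E x (nb x b) := fun x b => by cases b <;> simp [nb, h₀, h₁]
  let extend : (Fin n → Bool) → ℕ → Bool := fun s k => if h : k < n then s ⟨k, h⟩ else false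
  refine ⟨fun s i => walk nb v (extend s) i, fun s t hst => funext fun j => ?_,
    fun s => ⟨fun i => hnb _ _, rfl⟩⟩
  have hj : walk nb v (extend s) (j + 1) = walk nb v (extend t) (j + 1) := congrFun hst j.succ
  have hj₀ : walk nb v (extend s) j = walk nb v (extend t) j := congrFun hst j.castSucc
  rw [walk, walk, hj₀] at hj
  have : extend s j = extend t j := by
    revert hj; cases extend s j <;> cases extend t j <;> simp [nb, hne, (hne _).symm]
  simpa [extend] using this

lemma eq_self_of_inSet_injective (hφ : ∀ u v, E u v → φ v = φ u + 1)
    (hinj : Function.Injective (inSet E)) {g : Equiv.Perm V} (hg : g ∈ autGroup E) {c : ℤ}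
    (hfix : ∀ x, φ x = c → g x = x) (x : V) (hx : c ≤ φ x) : g x = x := by
  suffices ∀ j : ℕ, ∀ x, φ x = c + j → g x = x from this (φ x - c).toNat x (by omega)
  intro j
  induction j with
  | zero => simpa using hfix
  | succ j ih =>
    intro x hx
    refine hinj ?_
    rw [← image_inSet_of_mem_autGroup hg]
    refine Set.EqOn.image_eq_self fun u hu => ih u ?_
    have := hφ u x hu
    push_cast at hx
    omega

end Digraph

def levelAut (E : V → V → Prop) (φ : V → ℤ) : Subgroup (Equiv.Perm V) where
  carrier := {g | g ∈ autGroup E ∧ ∀ x, φ (g x) = φ x}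
  one_mem' := ⟨one_mem _, fun _ => rfl⟩
  mul_mem' ha hb := ⟨mul_mem ha.1 hb.1, fun x => (ha.2 _).trans (hb.2 x)⟩
  inv_mem' {g} hg := ⟨inv_mem hg.1, fun x => by simpa using (hg.2 (g⁻¹ x)).symm⟩

structure IsHATLayering (E : V → V → Prop) (φ : V → ℤ) (m : ℕ) : Prop where
  connected : DConnected E
  highlyArcTransitive : HighlyArcTransitive E
  ncard_outSet : ∀ v, (outSet E v).ncard = 2
  map_adj : ∀ u v, E u v → φ v = φ u + 1
  ncard_fibre : ∀ i, (φ ⁻¹' {i}).ncard = m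
  pos : 0 < m

section InClass

variable (E : V → V → Prop)

def InClass : Type _ := Quotient (Setoid.ker (inSet E))

def inClass (v : V) : InClass E := Quotient.mk _ v

def inClassAdj : InClass E → InClass E → Prop := Relation.Map E (inClass E) (inClass E)

variable {E}

lemma inClass_eq_inClass {u v : V} : inClass E u = inClass E v ↔ inSet E u = inSet E v :=
  Quotient.eq

lemma inClass_surjective : Function.Surjective (inClass E) := Quotient.mk_surjective

lemma inClassAdj_inClass {u v : V} (h : E u v) : inClassAdj E (inClass E u) (inClass E v) :=
  ⟨u, v, h, rfl, rfl⟩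

def inClassPerm {g : Equiv.Perm V} (hg : g ∈ autGroup E) : Equiv.Perm (InClass E) :=
  Quotient.congr g fun x y => by
    change inSet E x = inSet E y ↔ inSet E (g x) = inSet E (g y)
    rw [← image_inSet_of_mem_autGroup hg, ← image_inSet_of_mem_autGroup hg,
      Set.image_eq_image g.injective]

lemma inClassPerm_inClass {g : Equiv.Perm V} (hg : g ∈ autGroup E) (v : V) :
    inClassPerm hg (inClass E v) = inClass E (g v) := rfl

lemma inClassPerm_mem_autGroup {g : Equiv.Perm V} (hg : g ∈ autGroup E) :
    inClassPerm hg ∈ autGroup (inClassAdj E) := by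
  have key : ∀ {g : Equiv.Perm V} (hg : g ∈ autGroup E) {B C : InClass E}, inClassAdj E B C →
      inClassAdj E (inClassPerm hg B) (inClassPerm hg C) := by
    rintro g hg _ _ ⟨x, y, hxy, rfl, rfl⟩
    exact inClassAdj_inClass ((hg x y).mp hxy)
  have hinv : ∀ B, inClassPerm (inv_mem hg) (inClassPerm hg B) = B := fun B => by
    obtain ⟨v, rfl⟩ := inClass_surjective B
    simp [inClassPerm_inClass]
  refine fun B C => ⟨key hg, fun h => ?_⟩
  simpa only [hinv] using key (inv_mem hg) h

end InClass

namespace IsHATLayering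

variable {E : V → V → Prop} {φ : V → ℤ} {m : ℕ} (hG : IsHATLayering E φ m)
include hG

lemma finite_fibre (i : ℤ) : (φ ⁻¹' {i}).Finite :=
  Set.finite_of_ncard_pos (hG.ncard_fibre i ▸ hG.pos)

lemma surjective : Function.Surjective φ := fun i =>
  Set.nonempty_of_ncard_ne_zero (hG.ncard_fibre i ▸ hG.pos.ne')

lemma vertexTransitive : VertexTransitive E := hG.highlyArcTransitive.vertexTransitive

lemma ncard_inSet (v : V) : (inSet E v).ncard = 2 :=
  hG.vertexTransitive.ncard_inSet_eq_of_ncard_outSet hG.map_adj hG.ncard_outSet hG.ncard_fibre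
    hG.pos.ne' v

lemma two_le : 2 ≤ m := by
  obtain ⟨v, -⟩ := hG.surjective 0
  rw [← hG.ncard_outSet v, ← hG.ncard_fibre (φ v + 1)]
  exact Set.ncard_le_ncard (fun w hw => hG.map_adj v w hw) (hG.finite_fibre _)

lemma exists_two_adj (v : V) : ∃ w₀ w₁, w₀ ≠ w₁ ∧ E v w₀ ∧ E v w₁ := by
  obtain ⟨w₀, w₁, hne, h⟩ := Set.ncard_eq_two.mp (hG.ncard_outSet v)
  exact ⟨w₀, w₁, hne, h.ge (by simp), h.ge (by simp)⟩

lemma nonempty_outSet (v : V) : (outSet E v).Nonempty :=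
  Set.nonempty_of_ncard_ne_zero (by rw [hG.ncard_outSet]; norm_num)

lemma nonempty_inSet (v : V) : (inSet E v).Nonempty :=
  Set.nonempty_of_ncard_ne_zero (by rw [hG.ncard_inSet]; norm_num)

lemma mem_levelAut {g : Equiv.Perm V} (hg : g ∈ autGroup E) {v : V} (hv : g v = v) :
    g ∈ levelAut E φ :=
  ⟨hg, fun x => by
    have := sub_eq_sub_of_mem_autGroup hG.connected hG.map_adj hg x v
    rw [hv] at this
    omega⟩

lemma exists_ne_inSet_eq : ∃ u u', u ≠ u' ∧ inSet E u = inSet E u' := by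
  by_contra! hne
  have hinj : Function.Injective (inSet E) := fun u u' h => by_contra fun h' => hne u u' h' h
  obtain ⟨v, -⟩ := hG.surjective 0
  let F := φ ⁻¹' {φ v}
  have : Finite F := (hG.finite_fibre _).to_subtype
  obtain ⟨f, hf, hfarc⟩ := exists_injective_kArcs hG.exists_two_adj (m ^ m) v
  choose a ha hmap using fun s =>
    hG.highlyArcTransitive _ _ _ (hfarc fun _ => false).1 (hfarc s).1
  have hlev : ∀ s, a s ∈ levelAut E φ := fun s =>
    hG.mem_levelAut (ha s) (by simpa [(hfarc _).2, (hfarc s).2] using hmap s 0)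
  let Θ : (Fin (m ^ m) → Bool) → F → F := fun s x =>
    ⟨a s x, by simp only [F, Set.mem_preimage, (hlev s).2]; exact x.2⟩
  have hΘ : Function.Injective Θ := by
    intro s t hst
    have hfix : ∀ x, φ v ≤ φ x → ((a t)⁻¹ * a s) x = x := by
      refine eq_self_of_inSet_injective hG.map_adj hinj (mul_mem (inv_mem (ha t)) (ha s)) ?_
      intro x hx
      have := congrArg Subtype.val (congrFun hst ⟨x, hx⟩)
      simp only [Θ] at this
      simp [this]
    refine hf (funext fun i => ?_)
    rw [← hmap s i, ← hmap t i, ← (a t).apply_symm_apply (a s _)]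
    congr 1
    refine hfix _ ?_
    rw [(hfarc _).1.map_apply hG.map_adj, (hfarc _).2]
    omega
  have := Nat.card_le_card_of_injective Θ hΘ
  simp only [Nat.card_fun, Nat.card_coe_set_eq, F, hG.ncard_fibre, Nat.card_eq_fintype_card,
    Fintype.card_pi, Fintype.card_bool, Finset.prod_const, Finset.card_univ,
    Fintype.card_fin] at this
  exact (Nat.lt_two_pow_self).not_ge this

lemma exists_inTwin (v : V) : ∃ u, u ≠ v ∧ inSet E u = inSet E v := by
  obtain ⟨u, u', hne, h⟩ := hG.exists_ne_inSet_eq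
  obtain ⟨a, ha, rfl⟩ := hG.vertexTransitive u' v
  refine ⟨a u, a.injective.ne hne, ?_⟩
  rw [← image_inSet_of_mem_autGroup ha, h, image_inSet_of_mem_autGroup ha]

lemma eq_of_inSet_eq_of_ne {u u' v : V} (hu : u ≠ v) (h : inSet E u = inSet E v) (hu' : u' ≠ v)
    (h' : inSet E u' = inSet E v) : u' = u := by
  obtain ⟨p, hp⟩ := hG.nonempty_inSet v
  have hpu : E p u := show p ∈ inSet E u from h ▸ hp
  have hpu' : E p u' := show p ∈ inSet E u' from h' ▸ hp
  have : u' ∈ outSet E p := hpu'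
  rw [Set.eq_pair_of_ncard_eq_two (hG.ncard_outSet p) hpu hp hu] at this
  simpa [hu'] using this

lemma map_eq_of_inSet_eq {u v : V} (h : inSet E u = inSet E v) : φ u = φ v := by
  obtain ⟨p, hp⟩ := hG.nonempty_inSet v
  rw [hG.map_adj p v hp, hG.map_adj p u (show p ∈ inSet E u from h ▸ hp)]

noncomputable def inTwin (v : V) : V := (hG.exists_inTwin v).choose

lemma inTwin_ne (v : V) : hG.inTwin v ≠ v := (hG.exists_inTwin v).choose_spec.1

lemma inSet_inTwin (v : V) : inSet E (hG.inTwin v) = inSet E v :=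
  (hG.exists_inTwin v).choose_spec.2

lemma inSet_eq_iff {u v : V} : inSet E u = inSet E v ↔ u = v ∨ u = hG.inTwin v := by
  refine ⟨fun h => or_iff_not_imp_left.mpr fun hne => ?_, ?_⟩
  · exact hG.eq_of_inSet_eq_of_ne (hG.inTwin_ne v) (hG.inSet_inTwin v) hne h
  · rintro (rfl | rfl)
    exacts [rfl, hG.inSet_inTwin v]

lemma inTwin_inTwin (v : V) : hG.inTwin (hG.inTwin v) = v :=
  ((hG.inSet_eq_iff.mp (hG.inSet_inTwin _).symm).resolve_left (hG.inTwin_ne v).symm).symm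

lemma map_inTwin (v : V) : φ (hG.inTwin v) = φ v := hG.map_eq_of_inSet_eq (hG.inSet_inTwin v)

lemma adj_inTwin {v w : V} (h : E v w) : E v (hG.inTwin w) :=
  show v ∈ inSet E (hG.inTwin w) by rw [hG.inSet_inTwin]; exact h

lemma outSet_eq {v w : V} (h : E v w) : outSet E v = {w, hG.inTwin w} :=
  Set.eq_pair_of_ncard_eq_two (hG.ncard_outSet v) h (hG.adj_inTwin h) (hG.inTwin_ne w).symm

lemma apply_inTwin {g : Equiv.Perm V} (hg : g ∈ autGroup E) (v : V) :
    g (hG.inTwin v) = hG.inTwin (g v) := by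
  refine (hG.inSet_eq_iff.mp ?_).resolve_left (g.injective.ne (hG.inTwin_ne v))
  rw [← image_inSet_of_mem_autGroup hg, ← image_inSet_of_mem_autGroup hg, hG.inSet_inTwin]

def classLevel : InClass E → ℤ := Quotient.lift φ fun _ _ h => hG.map_eq_of_inSet_eq h

lemma classLevel_inClass (v : V) : hG.classLevel (inClass E v) = φ v := rfl

lemma inClass_eq_inClass_iff {u v : V} : inClass E u = inClass E v ↔ u = v ∨ u = hG.inTwin v :=
  inClass_eq_inClass.trans hG.inSet_eq_iff

lemma inClass_inTwin (v : V) : inClass E (hG.inTwin v) = inClass E v :=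
  inClass_eq_inClass.mpr (hG.inSet_inTwin v)

noncomputable def outClass (v : V) : InClass E := inClass E (hG.nonempty_outSet v).choose

lemma adj_iff_inClass_eq_outClass {v w : V} : E v w ↔ inClass E w = hG.outClass v := by
  change w ∈ outSet E v ↔ _
  rw [hG.outSet_eq (hG.nonempty_outSet v).choose_spec, outClass, hG.inClass_eq_inClass_iff]
  rfl

lemma inClassAdj_outClass (v : V) : inClassAdj E (inClass E v) (hG.outClass v) := by
  obtain ⟨w, hw⟩ := hG.nonempty_outSet v
  exact hG.adj_iff_inClass_eq_outClass.mp hw ▸ inClassAdj_inClass hw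

lemma exists_outClass_eq {B C : InClass E} (h : inClassAdj E B C) :
    ∃ v, inClass E v = B ∧ hG.outClass v = C := by
  obtain ⟨v, w, hvw, rfl, rfl⟩ := h
  exact ⟨v, rfl, (hG.adj_iff_inClass_eq_outClass.mp hvw).symm⟩

lemma outClass_apply {g : Equiv.Perm V} (hg : g ∈ autGroup E) (v : V) :
    hG.outClass (g v) = inClassPerm hg (hG.outClass v) := by
  obtain ⟨w, hw⟩ := hG.nonempty_outSet v
  rw [← hG.adj_iff_inClass_eq_outClass.mp hw, inClassPerm_inClass,
    ← hG.adj_iff_inClass_eq_outClass.mp ((hg v w).mp hw)]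

section SharedOutClass

variable (H : ∀ x, hG.outClass (hG.inTwin x) = hG.outClass x)

noncomputable def succClass : InClass E → InClass E :=
  Quotient.lift hG.outClass fun x y hxy => by
    rcases hG.inSet_eq_iff.mp hxy with rfl | rfl
    exacts [rfl, H y]

lemma succClass_inClass (x : V) : hG.succClass H (inClass E x) = hG.outClass x := rfl

lemma succClass_injective : Function.Injective (hG.succClass H) := by
  intro B C hBC
  obtain ⟨x, rfl⟩ := inClass_surjective B
  obtain ⟨y, rfl⟩ := inClass_surjective C
  obtain ⟨w, hw⟩ := hG.nonempty_outSet x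
  rw [succClass_inClass, succClass_inClass] at hBC
  have hyw : E y w := hG.adj_iff_inClass_eq_outClass.mpr
    (hBC ▸ hG.adj_iff_inClass_eq_outClass.mp hw)
  have hxw : E (hG.inTwin x) w := hG.adj_iff_inClass_eq_outClass.mpr
    ((H x).symm ▸ hG.adj_iff_inClass_eq_outClass.mp hw)
  have : y ∈ inSet E w := hyw
  rw [Set.eq_pair_of_ncard_eq_two (hG.ncard_inSet w) hw hxw (hG.inTwin_ne x).symm] at this
  exact (hG.inClass_eq_inClass_iff.mpr this).symm

lemma classLevel_iterate_succClass (a : ℕ) (B : InClass E) :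
    hG.classLevel ((hG.succClass H)^[a] B) = hG.classLevel B + a := by
  induction a with
  | zero => simp
  | succ a ih =>
    obtain ⟨x, hx⟩ := inClass_surjective ((hG.succClass H)^[a] B)
    obtain ⟨w, hw⟩ := hG.nonempty_outSet x
    rw [Function.iterate_succ_apply', ← hx, succClass_inClass,
      ← hG.adj_iff_inClass_eq_outClass.mp hw, classLevel_inClass, hG.map_adj x w hw,
      ← classLevel_inClass hG x, hx, ih]
    push_cast
    ring

lemma exists_iterate_succClass_eq (u v : V) :
    ∃ a b : ℕ, (hG.succClass H)^[a] (inClass E u) = (hG.succClass H)^[b] (inClass E v) := by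
  have hstep : ∀ {x y}, E x y → inClass E y = hG.succClass H (inClass E x) := fun h =>
    hG.adj_iff_inClass_eq_outClass.mp h
  induction hG.connected v u with
  | refl => exact ⟨0, 0, rfl⟩
  | tail _ h ih =>
    obtain ⟨a, b, hab⟩ := ih
    rcases h with h | h
    · cases a with
      | zero => exact ⟨0, b + 1, by rw [Function.iterate_succ_apply', ← hab, hstep h]; rfl⟩
      | succ a => exact ⟨a, b, by rw [← hab, Function.iterate_succ_apply, hstep h]⟩
    · exact ⟨a + 1, b, by rw [Function.iterate_succ_apply, ← hstep h, hab]⟩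

end SharedOutClass

/-- Otherwise, by vertex-transitivity, every pair of in-twins shares its out-neighbours; the
classes of in-twins then form a single path, so that each fibre is a single pair of in-twins. -/
lemma outClass_inTwin_ne (hm : 2 < m) (v : V) : hG.outClass (hG.inTwin v) ≠ hG.outClass v := by
  intro hv
  have H : ∀ x, hG.outClass (hG.inTwin x) = hG.outClass x := by
    intro x
    obtain ⟨a, ha, rfl⟩ := hG.vertexTransitive v x
    rw [← hG.apply_inTwin ha, hG.outClass_apply ha, hG.outClass_apply ha, hv]
  have hsub : φ ⁻¹' {φ v} ⊆ {v, hG.inTwin v} := by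
    intro z hz
    obtain ⟨a, b, hab⟩ := hG.exists_iterate_succClass_eq H z v
    have := congrArg hG.classLevel hab
    rw [classLevel_iterate_succClass, classLevel_iterate_succClass, classLevel_inClass,
      classLevel_inClass, Set.mem_preimage.mp hz] at this
    obtain rfl : a = b := by simpa using this
    exact hG.inClass_eq_inClass_iff.mp ((hG.succClass_injective H).iterate a hab)
  have := Set.ncard_le_ncard hsub (Set.toFinite _)
  rw [hG.ncard_fibre, Set.ncard_pair (hG.inTwin_ne v).symm] at this
  omega

lemma inClassAdj_inClass_iff {v : V} {C : InClass E} :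
    inClassAdj E (inClass E v) C ↔ C = hG.outClass v ∨ C = hG.outClass (hG.inTwin v) := by
  refine ⟨fun ⟨x, y, hxy, hx, hy⟩ => ?_, ?_⟩
  · rw [← hy]
    rcases hG.inClass_eq_inClass_iff.mp hx with rfl | rfl
    exacts [Or.inl (hG.adj_iff_inClass_eq_outClass.mp hxy),
      Or.inr (hG.adj_iff_inClass_eq_outClass.mp hxy)]
  · rintro (rfl | rfl)
    · exact hG.inClassAdj_outClass v
    · exact hG.inClass_inTwin v ▸ hG.inClassAdj_outClass _

lemma eq_of_inClass_eq_of_outClass_eq (hm : 2 < m) {u v : V} (h₁ : inClass E u = inClass E v)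
    (h₂ : hG.outClass u = hG.outClass v) : u = v := by
  rcases hG.inClass_eq_inClass_iff.mp h₁ with rfl | rfl
  exacts [rfl, absurd h₂ (hG.outClass_inTwin_ne hm v)]

/-- `E` is the line digraph of `inClassAdj E`. -/
noncomputable def arcEquiv (hm : 2 < m) :
    V ≃ {p : InClass E × InClass E // inClassAdj E p.1 p.2} :=
  Equiv.ofBijective (fun v => ⟨(inClass E v, hG.outClass v), hG.inClassAdj_outClass v⟩)
    ⟨fun _ _ h =>
      hG.eq_of_inClass_eq_of_outClass_eq hm (congrArg (·.1.1) h) (congrArg (·.1.2) h),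
      fun ⟨_, h⟩ =>
        let ⟨v, hB, hC⟩ := hG.exists_outClass_eq h; ⟨v, by ext <;> simp [hB, hC]⟩⟩

lemma inClass_arcEquiv_symm (hm : 2 < m)
    (p : {p : InClass E × InClass E // inClassAdj E p.1 p.2}) :
    inClass E ((hG.arcEquiv hm).symm p) = p.1.1 :=
  congrArg (·.1.1) ((hG.arcEquiv hm).apply_symm_apply p)

lemma outClass_arcEquiv_symm (hm : 2 < m)
    (p : {p : InClass E × InClass E // inClassAdj E p.1 p.2}) :
    hG.outClass ((hG.arcEquiv hm).symm p) = p.1.2 :=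
  congrArg (·.1.2) ((hG.arcEquiv hm).apply_symm_apply p)

lemma exists_lift_kArc (hm : 2 < m) {k : ℕ} {f' : Fin (k + 1) → InClass E}
    (hf' : IsKArc (inClassAdj E) k f') : ∃ f, IsKArc E k f ∧ ∀ i, inClass E (f i) = f' i := by
  let f : Fin (k + 1) → V := Fin.lastCases (Function.surjInv inClass_surjective (f' (Fin.last k)))
    fun i => (hG.arcEquiv hm).symm ⟨(f' i.castSucc, f' i.succ), hf' i⟩
  have hf : ∀ i, inClass E (f i) = f' i := Fin.lastCases
    (by simp [f, Function.surjInv_eq]) fun i => by simp [f, inClass_arcEquiv_symm]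
  refine ⟨f, fun i => ?_, hf⟩
  rw [hG.adj_iff_inClass_eq_outClass, hf]
  simp [f, outClass_arcEquiv_symm]

noncomputable def liftPerm (hm : 2 < m) {b : Equiv.Perm (InClass E)}
    (hb : b ∈ autGroup (inClassAdj E)) : Equiv.Perm V :=
  (hG.arcEquiv hm).symm.permCongr
    (Equiv.Perm.subtypePerm (Equiv.prodCongr b b) fun p => (hb p.1 p.2).symm)

lemma inClass_liftPerm (hm : 2 < m) {b : Equiv.Perm (InClass E)}
    (hb : b ∈ autGroup (inClassAdj E)) (v : V) :
    inClass E (hG.liftPerm hm hb v) = b (inClass E v) := by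
  rw [liftPerm, Equiv.permCongr_apply, Equiv.symm_symm, inClass_arcEquiv_symm]
  rfl

lemma outClass_liftPerm (hm : 2 < m) {b : Equiv.Perm (InClass E)}
    (hb : b ∈ autGroup (inClassAdj E)) (v : V) :
    hG.outClass (hG.liftPerm hm hb v) = b (hG.outClass v) := by
  rw [liftPerm, Equiv.permCongr_apply, Equiv.symm_symm, outClass_arcEquiv_symm]
  rfl

lemma liftPerm_mem_levelAut (hm : 2 < m) {b : Equiv.Perm (InClass E)}
    (hb : b ∈ levelAut (inClassAdj E) hG.classLevel) : hG.liftPerm hm hb.1 ∈ levelAut E φ := by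
  refine ⟨fun v w => ?_, fun v => ?_⟩
  · rw [hG.adj_iff_inClass_eq_outClass, hG.adj_iff_inClass_eq_outClass, inClass_liftPerm,
      outClass_liftPerm, b.apply_eq_iff_eq]
  · rw [← classLevel_inClass hG, inClass_liftPerm, hb.2, classLevel_inClass]

noncomputable def levelAutHom : levelAut E φ →* levelAut (inClassAdj E) hG.classLevel where
  toFun g := ⟨inClassPerm g.2.1, inClassPerm_mem_autGroup g.2.1, fun B => by
    obtain ⟨v, rfl⟩ := inClass_surjective B
    exact g.2.2 v⟩
  map_one' := by
    ext B
    obtain ⟨v, rfl⟩ := inClass_surjective B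
    rfl
  map_mul' g h := by
    ext B
    obtain ⟨v, rfl⟩ := inClass_surjective B
    rfl

lemma levelAutHom_bijective (hm : 2 < m) : Function.Bijective hG.levelAutHom := by
  refine ⟨(injective_iff_map_eq_one _).mpr fun g hg => ?_, fun b => ?_⟩
  · have hB : ∀ B, inClassPerm g.2.1 B = B := fun B =>
      congrArg (fun h : levelAut (inClassAdj E) hG.classLevel => (h : Equiv.Perm _) B) hg
    ext v
    exact hG.eq_of_inClass_eq_of_outClass_eq hm (hB (inClass E v))
      ((hG.outClass_apply g.2.1 v).trans (hB _))
  · refine ⟨⟨_, hG.liftPerm_mem_levelAut hm b.2⟩, ?_⟩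
    ext B
    obtain ⟨v, rfl⟩ := inClass_surjective B
    exact hG.inClass_liftPerm hm b.2.1 v

lemma classLevel_preimage (i : ℤ) : hG.classLevel ⁻¹' {i} = inClass E '' (φ ⁻¹' {i}) := by
  ext B
  obtain ⟨v, rfl⟩ := inClass_surjective B
  refine ⟨fun hv => ⟨v, hv, rfl⟩, ?_⟩
  rintro ⟨u, hu, huv⟩
  rw [Set.mem_preimage, ← huv]
  exact hu

lemma ncard_classLevel_preimage_lt (i : ℤ) : (hG.classLevel ⁻¹' {i}).ncard < m := by
  obtain ⟨v, hv⟩ := hG.surjective i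
  rw [hG.classLevel_preimage, ← hG.ncard_fibre i]
  refine (Set.ncard_image_le (hG.finite_fibre i)).lt_of_ne fun h => hG.inTwin_ne v ?_
  refine (Set.ncard_image_iff (hG.finite_fibre i)).mp h ?_ ?_ (hG.inClass_inTwin v)
  · simp [hG.map_inTwin, hv]
  · simp [hv]

lemma isHATLayering_inClassAdj (hm : 2 < m) :
    IsHATLayering (inClassAdj E) hG.classLevel (hG.classLevel ⁻¹' {0}).ncard := by
  have hc : DConnected (inClassAdj E) := by
    intro B C
    obtain ⟨u, rfl⟩ := inClass_surjective B
    obtain ⟨v, rfl⟩ := inClass_surjective C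
    exact (hG.connected u v).lift _ fun _ _ h => h.imp inClassAdj_inClass inClassAdj_inClass
  have hhat : HighlyArcTransitive (inClassAdj E) := by
    intro k f' g' hf' hg'
    obtain ⟨f, hf, hff'⟩ := hG.exists_lift_kArc hm hf'
    obtain ⟨g, hg, hgg'⟩ := hG.exists_lift_kArc hm hg'
    obtain ⟨a, ha, hmap⟩ := hG.highlyArcTransitive k f g hf hg
    exact ⟨inClassPerm ha, inClassPerm_mem_autGroup ha, fun i => by
      rw [← hff', inClassPerm_inClass, hmap, hgg']⟩
  have hadj : ∀ B C, inClassAdj E B C → hG.classLevel C = hG.classLevel B + 1 := by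
    rintro _ _ ⟨u, v, h, rfl, rfl⟩
    exact hG.map_adj u v h
  have hsurj : Function.Surjective hG.classLevel := fun i =>
    let ⟨v, hv⟩ := hG.surjective i; ⟨inClass E v, hv⟩
  refine ⟨hc, hhat, fun B => ?_, hadj,
    fun i => hhat.vertexTransitive.ncard_fibre_eq hc hadj hsurj i 0, ?_⟩
  · obtain ⟨v, rfl⟩ := inClass_surjective B
    have : outSet (inClassAdj E) (inClass E v) = {hG.outClass v, hG.outClass (hG.inTwin v)} := by
      ext C
      exact hG.inClassAdj_inClass_iff
    rw [this, Set.ncard_pair (hG.outClass_inTwin_ne hm v).symm]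
  · rw [hG.classLevel_preimage]
    exact Set.ncard_pos ((hG.finite_fibre 0).image _) |>.mpr
      ((Set.nonempty_of_ncard_ne_zero (hG.ncard_fibre 0 ▸ hG.pos.ne')).image _)

lemma adj_iff_of_eq_two (h2 : m = 2) {u w : V} : E u w ↔ φ w = φ u + 1 := by
  refine ⟨hG.map_adj u w, fun hw => ?_⟩
  have : outSet E u = φ ⁻¹' {φ u + 1} :=
    Set.eq_of_subset_of_ncard_le (fun w hw => hG.map_adj u w hw)
      (by rw [hG.ncard_fibre, hG.ncard_outSet, h2]) (hG.finite_fibre _)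
  exact this.ge hw

lemma eq_or_eq_inTwin_of_eq_two (h2 : m = 2) {u v : V} (h : φ u = φ v) :
    u = v ∨ u = hG.inTwin v := by
  have hF : (φ ⁻¹' {φ v}).ncard = 2 := h2 ▸ hG.ncard_fibre _
  have hu : u ∈ φ ⁻¹' {φ v} := h
  rwa [Set.eq_pair_of_ncard_eq_two hF (rfl : v ∈ φ ⁻¹' {φ v})
    (hG.map_inTwin v : hG.inTwin v ∈ φ ⁻¹' {φ v}) (hG.inTwin_ne v).symm] at hu

lemma mul_self_eq_one_of_eq_two (h2 : m = 2) (g : levelAut E φ) : g * g = 1 := by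
  ext v
  change (g : Equiv.Perm V) ((g : Equiv.Perm V) v) = v
  rcases hG.eq_or_eq_inTwin_of_eq_two h2 (g.2.2 v) with h | h
  · rw [h, h]
  · rcases hG.eq_or_eq_inTwin_of_eq_two h2 ((g.2.2 _).trans (hG.map_inTwin v)) with h' | h'
    · rw [h, h']
    · exact absurd ((g : Equiv.Perm V).injective (h'.trans h.symm)) (hG.inTwin_ne v)

noncomputable def levelSwap (s : ℤ → Bool) : Equiv.Perm V :=
  Function.Involutive.toPerm (fun x => if s (φ x) then hG.inTwin x else x) fun x => by
    by_cases hx : s (φ x) <;> simp [hx, hG.map_inTwin, hG.inTwin_inTwin]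

lemma levelSwap_apply (s : ℤ → Bool) (x : V) :
    hG.levelSwap s x = if s (φ x) then hG.inTwin x else x := rfl

lemma map_levelSwap (s : ℤ → Bool) (x : V) : φ (hG.levelSwap s x) = φ x := by
  by_cases hx : s (φ x) <;> simp [levelSwap_apply, hx, hG.map_inTwin]

lemma levelSwap_mem_levelAut (h2 : m = 2) (s : ℤ → Bool) : hG.levelSwap s ∈ levelAut E φ :=
  ⟨fun u w => by rw [hG.adj_iff_of_eq_two h2, hG.adj_iff_of_eq_two h2, hG.map_levelSwap,
    hG.map_levelSwap], hG.map_levelSwap s⟩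

lemma continuum_le_mk_levelAut_of_eq_two (h2 : m = 2) : 𝔠 ≤ #(levelAut E φ) := by
  have hinj : Function.Injective fun s : ℤ → Bool =>
      (⟨hG.levelSwap s, hG.levelSwap_mem_levelAut h2 s⟩ : levelAut E φ) := by
    intro s t hst
    ext i
    obtain ⟨v, rfl⟩ := hG.surjective i
    have := congrArg (fun g : levelAut E φ => (g : Equiv.Perm V) v) hst
    by_cases hs : s (φ v) <;> by_cases ht : t (φ v) <;>
      simp [levelSwap_apply, hs, ht, (hG.inTwin_ne v).symm, hG.inTwin_ne v] at this ⊢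
  have := lift_mk_le'.mpr ⟨⟨_, hinj⟩⟩
  simpa [← power_def] using this

end IsHATLayering

namespace IsHATLayering

theorem mul_self_eq_one_and_continuum_le (m : ℕ) :
    ∀ {V : Type u} {E : V → V → Prop} {φ : V → ℤ}, IsHATLayering E φ m →
      (∀ g : levelAut E φ, g * g = 1) ∧ 𝔠 ≤ #(levelAut E φ) := by
  induction m using Nat.strong_induction_on with
  | _ m ih =>
    intro V E φ hG
    obtain h2 | hm := hG.two_le.eq_or_lt
    · exact ⟨hG.mul_self_eq_one_of_eq_two h2.symm,
        hG.continuum_le_mk_levelAut_of_eq_two h2.symm⟩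
    · let e := MulEquiv.ofBijective _ (hG.levelAutHom_bijective hm)
      obtain ⟨hsq, hcard⟩ :=
        ih _ (hG.ncard_classLevel_preimage_lt 0) (hG.isHATLayering_inClassAdj hm)
      exact ⟨fun g => e.injective (by rw [map_mul, map_one, hsq]),
        hcard.trans (mk_congr e.toEquiv.symm).le⟩

variable {E : V → V → Prop} {φ : V → ℤ} {m : ℕ} (hG : IsHATLayering E φ m)
include hG

lemma mk_levelAut_le : #(levelAut E φ) ≤ 𝔠 := by
  have : Countable V := Set.Countable.of_preimage_singleton fun i => (hG.finite_fibre i).countable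
  have : Infinite V := Infinite.of_surjective φ hG.surjective
  calc #(levelAut E φ) ≤ #(Equiv.Perm V) := mk_subtype_le _
    _ = 𝔠 := by rw [mk_perm_eq_two_power, mk_eq_aleph0, two_power_aleph0]

lemma vStab_mul_self (v : V) (g : vStab E v) : g * g = 1 := by
  have := congrArg Subtype.val
    ((mul_self_eq_one_and_continuum_le m hG).1 ⟨g.1.1, hG.mem_levelAut g.1.2 g.2⟩)
  ext x
  exact congrArg (· x) this

lemma mk_vStab (v : V) : #(vStab E v) = 𝔠 := by
  let H := levelAut E φ
  have hcont := (mul_self_eq_one_and_continuum_le m hG).2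
  have horbit : (MulAction.orbit H v).Finite :=
    (hG.finite_fibre (φ v)).subset (by rintro _ ⟨g, rfl⟩; exact g.2.2 v)
  refine le_antisymm ((mk_le_of_injective (f := fun g : vStab E v =>
    (⟨g.1.1, hG.mem_levelAut g.1.2 g.2⟩ : H)) fun g h hgh => ?_).trans hG.mk_levelAut_le) ?_
  · exact Subtype.ext (Subtype.ext (congrArg (fun g : H => (g : Equiv.Perm V)) hgh))
  calc 𝔠 ≤ #H := hcont
    _ = #(MulAction.stabilizer H v) :=
      (mk_stabilizer_eq_of_finite_orbit horbit (aleph0_le_continuum.trans hcont)).symm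
    _ ≤ #(vStab E v) :=
      mk_le_of_injective (f := fun g => (⟨⟨g.1.1, g.1.2.1⟩, g.2⟩ : vStab E v))
        fun g h hgh => Subtype.ext (Subtype.ext (congrArg (·.1.1) hgh))

end IsHATLayering

theorem two_ended_valency_two_stabilizer_general
    {V : Type*} (E : V → V → Prop)
    (h2 : TwoEnded E) (hhat : HighlyArcTransitive E)
    (hout : ∀ v : V, (outSet E v).ncard = 2)
    (φ : V → ℤ)
    (hhom : ∀ u v : V, E u v → φ v = φ u + 1)
    (m : ℕ) (hm : 2 < m) (hfib : ∀ i : ℤ, (φ ⁻¹' {i}).ncard = m) :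
    ∀ v : V, Nonempty (↥(vStab E v) ≃* (∀ _ : ℤ, Multiplicative (ZMod 2))) := by
  intro v
  have hG : IsHATLayering E φ m := ⟨h2.1, hhat, hout, hhom, hfib, by omega⟩
  exact nonempty_mulEquiv_of_mul_self_eq_one (hG.vStab_mul_self v) (hG.mk_vStab v)

/-- In a two-ended highly-arc-transitive digraph of out-valency `2` with
fibre size `m > 2`, the stabilizer of a vertex in the automorphism group is an elementary
abelian `2`-group, isomorphic to `(ℤ/2)^ℤ`. -/
theorem two_ended_valency_two_stabilizer
    {V : Type*} (E : V → V → Prop)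
    (h2 : TwoEnded E) (hhat : HighlyArcTransitive E)
    (hout : ∀ v : V, (outSet E v).ncard = 2)
    (φ : V → ℤ) (hsurj : Function.Surjective φ)
    (hhom : ∀ u v : V, E u v → φ v = φ u + 1)
    (m : ℕ) (hm : 2 < m) (hfib : ∀ i : ℤ, (φ ⁻¹' {i}).ncard = m) :
    ∀ v : V, Nonempty (↥(vStab E v) ≃* (∀ _ : ℤ, Multiplicative (ZMod 2))) :=
  two_ended_valency_two_stabilizer_general E h2 hhat hout φ hhom m hm hfib
end

section
/- Let Γ be a connected two-ended highly-arc-transitive digraph of prime out-valency with fibre size m > 2. Then Γ is skew-symmetric: Γ is isomorphic to its reverse digraph. -/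
variable {V : Type*}

/-!
Let `φ` be the level map. Double counting between consecutive levels shows that the
in-valency is also `p`. By arc-transitivity the stabiliser of `u` is transitive on the `p`
out-neighbours of `u`, so every invariant equivalence relation on them is trivial or universal.
If both "same in-neighbourhood" on out-neighbourhoods and "same out-neighbourhood" on
in-neighbourhoods were trivial, an automorphism fixing one level pointwise would be the
identity, so vertex stabilisers would be finite; but high arc-transitivity with out-valency
`p ≥ 2` makes them infinite. Hence the arcs form a disjoint union of copies of `K_{p,p}`.

Now consider "same out-neighbourhood" on out-neighbourhoods. If it is universal, consecutive
levels are completely joined and any bijection mapping each level `i` onto level `-i` reverses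
the digraph. Otherwise the digraph is the line digraph of its quotient by out-twins, which
satisfies the same hypotheses with levels of size `m / p`; by induction on `m` the quotient is
isomorphic to its reverse, and the line digraph of the reverse is the reverse of the line digraph.
-/

open Set Function

variable {E : V → V → Prop}

lemma autGroup_swap : autGroup (swap E) = autGroup E := by
  ext a
  exact ⟨fun h u v => h v u, fun h u v => h v u⟩

lemma outSet_apply_of_mem_autGroup {a : Equiv.Perm V} (ha : a ∈ autGroup E) (x : V) :
    outSet E (a x) = a '' outSet E x := by
  ext y
  obtain ⟨y, rfl⟩ := a.surjective y
  rw [a.injective.mem_set_image]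
  exact (ha x y).symm

lemma inSet_apply_of_mem_autGroup {a : Equiv.Perm V} (ha : a ∈ autGroup E) (x : V) :
    inSet E (a x) = a '' inSet E x :=
  outSet_apply_of_mem_autGroup (E := swap E) (by rwa [autGroup_swap]) x

lemma outSet_apply_eq_outSet_apply_iff {a : Equiv.Perm V} (ha : a ∈ autGroup E) (x y : V) :
    outSet E (a x) = outSet E (a y) ↔ outSet E x = outSet E y := by
  rw [outSet_apply_of_mem_autGroup ha, outSet_apply_of_mem_autGroup ha,
    a.injective.image_injective.eq_iff]

lemma inSet_apply_eq_inSet_apply_iff {a : Equiv.Perm V} (ha : a ∈ autGroup E) (x y : V) :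
    inSet E (a x) = inSet E (a y) ↔ inSet E x = inSet E y :=
  outSet_apply_eq_outSet_apply_iff (E := swap E) (by rwa [autGroup_swap]) x y

lemma HighlyArcTransitive.arcTransitive (h : HighlyArcTransitive E) : ArcTransitive E := by
  intro u v x y huv hxy
  obtain ⟨a, ha, hf⟩ := h 1 ![u, v] ![x, y] (by simpa [IsKArc] using huv)
    (by simpa [IsKArc] using hxy)
  exact ⟨a, ha, hf 0, hf 1⟩

lemma ArcTransitive.swap (h : ArcTransitive E) : ArcTransitive (swap E) := by
  intro u v x y huv hxy
  obtain ⟨a, ha, hv, hu⟩ := h v u y x huv hxy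
  exact ⟨a, by rwa [autGroup_swap], hu, hv⟩

lemma ArcTransitive.vertexTransitive (h : ArcTransitive E) (hne : ∀ v, (outSet E v).Nonempty) :
    VertexTransitive E := by
  intro u w
  obtain ⟨v, hv⟩ := hne u
  obtain ⟨y, hy⟩ := hne w
  obtain ⟨a, ha, hu, -⟩ := h u v w y hv hy
  exact ⟨a, ha, hu⟩

theorem const_or_injOn_of_ncard_prime {β : Type*} {S : Set V} (hS : S.ncard.Prime) (F : V → β)
    (htrans : ∀ a ∈ S, ∀ b ∈ S, ∃ σ : Equiv.Perm V, σ '' S = S ∧ σ a = b ∧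
      ∀ x y, F (σ x) = F (σ y) ↔ F x = F y) :
    (∀ x ∈ S, ∀ y ∈ S, F x = F y) ∨ InjOn F S := by
  classical
  have hfin : S.Finite := finite_of_ncard_ne_zero hS.ne_zero
  obtain ⟨a₀, ha₀⟩ : S.Nonempty := nonempty_of_ncard_ne_zero hS.ne_zero
  let C : V → Finset V := fun a => {b ∈ hfin.toFinset | F b = F a}
  have hC : ∀ a ∈ S, (C a).card = (C a₀).card := by
    intro a ha
    obtain ⟨σ, hσS, hσa, hσF⟩ := htrans a₀ ha₀ a ha
    have himage : (C a₀).image σ = C a := by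
      ext y
      simp only [C, Finset.mem_image, Finset.mem_filter, Finite.mem_toFinset]
      constructor
      · rintro ⟨x, ⟨hx, hxF⟩, rfl⟩
        exact ⟨hσS ▸ mem_image_of_mem σ hx, hσa ▸ (hσF x a₀).2 hxF⟩
      · rintro ⟨hy, hyF⟩
        obtain ⟨x, hx, rfl⟩ := hσS.symm ▸ hy
        exact ⟨x, ⟨hx, (hσF x a₀).1 (hσa ▸ hyF)⟩, rfl⟩
    rw [← himage, Finset.card_image_of_injective _ σ.injective]
  have hdvd : (C a₀).card ∣ S.ncard := by
    rw [ncard_eq_toFinset_card S hfin, Finset.card_eq_sum_card_image F hfin.toFinset]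
    apply Finset.dvd_sum
    intro b hb
    obtain ⟨a, ha, rfl⟩ := Finset.mem_image.1 hb
    rw [← hC a (hfin.mem_toFinset.1 ha)]
  rcases (Nat.dvd_prime hS).1 hdvd with h1 | hp
  · refine Or.inr fun x hx y hy hxy => ?_
    have hcard : (C x).card ≤ 1 := by rw [hC x hx, h1]
    exact Finset.card_le_one.1 hcard x (by simp [C, hx]) y (by simp [C, hy, hxy.symm])
  · refine Or.inl fun x hx y hy => ?_
    have hCx : C x = hfin.toFinset := Finset.eq_of_subset_of_card_le (Finset.filter_subset _ _)
      (by rw [hC x hx, hp, ncard_eq_toFinset_card S hfin])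
    have hy' : y ∈ C x := hCx ▸ hfin.mem_toFinset.2 hy
    exact (Finset.mem_filter.1 hy').2.symm

theorem ArcTransitive.forall_const_or_forall_injOn {β : Type*} {p : ℕ} (hE : ArcTransitive E)
    (hp : p.Prime) (hout : ∀ u, (outSet E u).ncard = p) {F : V → β}
    (hF : ∀ a ∈ autGroup E, ∀ x y, F (a x) = F (a y) ↔ F x = F y) :
    (∀ u, ∀ v ∈ outSet E u, ∀ v' ∈ outSet E u, F v = F v') ∨ ∀ u, InjOn F (outSet E u) := by
  by_cases hconst : ∀ u, ∀ v ∈ outSet E u, ∀ v' ∈ outSet E u, F v = F v'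
  · exact Or.inl hconst
  push Not at hconst
  obtain ⟨u, v, hv, v', hv', hne⟩ := hconst
  have hinj : InjOn F (outSet E u) := by
    refine (const_or_injOn_of_ncard_prime (hout u ▸ hp) F fun a ha b hb => ?_).resolve_left
      fun h => hne (h v hv v' hv')
    obtain ⟨σ, hσ, hσu, hσa⟩ := hE u a u b ha hb
    exact ⟨σ, by rw [← outSet_apply_of_mem_autGroup hσ, hσu], hσa, hF σ hσ⟩
  refine Or.inr fun w => ?_
  have hne : ∀ x, (outSet E x).Nonempty := fun x =>
    nonempty_of_ncard_ne_zero (by rw [hout]; exact hp.ne_zero)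
  obtain ⟨σ, hσ, rfl⟩ := hE.vertexTransitive hne u w
  rw [outSet_apply_of_mem_autGroup hσ]
  rintro _ ⟨x, hx, rfl⟩ _ ⟨y, hy, rfl⟩ hxy
  rw [hinj hx hy ((hF σ hσ x y).1 hxy)]

lemma level_apply_sub_self_eq {φ : V → ℤ} (hconn : DConnected E)
    (hφ : ∀ u v, E u v → φ v = φ u + 1) {a : Equiv.Perm V} (ha : a ∈ autGroup E) (x y : V) :
    φ (a y) - φ y = φ (a x) - φ x := by
  induction hconn x y with
  | refl => rfl
  | tail _ hbc ih =>
    rcases hbc with hbc | hcb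
    · have := hφ _ _ ((ha _ _).1 hbc)
      have := hφ _ _ hbc
      omega
    · have := hφ _ _ ((ha _ _).1 hcb)
      have := hφ _ _ hcb
      omega

lemma level_apply_eq_of_apply_eq_self {φ : V → ℤ} (hconn : DConnected E)
    (hφ : ∀ u v, E u v → φ v = φ u + 1) {a : Equiv.Perm V} (ha : a ∈ autGroup E) {u : V}
    (hu : a u = u) (x : V) : φ (a x) = φ x := by
  have := level_apply_sub_self_eq hconn hφ ha u x
  rw [hu] at this
  omega

structure IsLayeredHAT (E : V → V → Prop) (φ : V → ℤ) (p m : ℕ) : Prop where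
  connected : DConnected E
  highlyArcTransitive : HighlyArcTransitive E
  prime : p.Prime
  outSet_ncard : ∀ v, (outSet E v).ncard = p
  level_succ : ∀ u v, E u v → φ v = φ u + 1
  level_ncard : ∀ i, (φ ⁻¹' {i}).ncard = m
  pos : 0 < m

namespace IsLayeredHAT

variable {φ : V → ℤ} {p m : ℕ} (N : IsLayeredHAT E φ p m)
include N

lemma level_finite (i : ℤ) : (φ ⁻¹' {i}).Finite :=
  finite_of_ncard_pos (N.level_ncard i ▸ N.pos)

lemma level_nonempty (i : ℤ) : (φ ⁻¹' {i}).Nonempty :=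
  nonempty_of_ncard_ne_zero (N.level_ncard i ▸ N.pos.ne')

lemma inSet_finite (v : V) : (inSet E v).Finite :=
  (N.level_finite (φ v - 1)).subset fun u hu => by
    have := N.level_succ u v hu
    simp only [mem_preimage, mem_singleton_iff]
    omega

lemma outSet_nonempty (u : V) : (outSet E u).Nonempty :=
  nonempty_of_ncard_ne_zero (N.outSet_ncard u ▸ N.prime.ne_zero)

lemma arcTransitive : ArcTransitive E := N.highlyArcTransitive.arcTransitive

lemma vertexTransitive : VertexTransitive E := N.arcTransitive.vertexTransitive N.outSet_nonempty

-- Double counting of the arcs between two consecutive levels.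
lemma inSet_ncard (v : V) : (inSet E v).ncard = p := by
  classical
  have hconst : ∀ w, (inSet E w).ncard = (inSet E v).ncard := by
    intro w
    obtain ⟨a, ha, rfl⟩ := N.vertexTransitive v w
    rw [inSet_apply_of_mem_autGroup ha, ncard_image_of_injective _ a.injective]
  set s := (N.level_finite (φ v - 1)).toFinset
  set t := (N.level_finite (φ v)).toFinset
  have hcount : s.card * p = t.card * (inSet E v).ncard := by
    refine Finset.card_mul_eq_card_mul E (fun u hu => ?_) (fun w hw => ?_)
    · rw [← N.outSet_ncard u, ← ncard_coe_finset, Finset.coe_bipartiteAbove]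
      congr 1
      ext w
      simp only [mem_ofPred_eq, s, t, Finite.mem_toFinset, mem_preimage,
        mem_singleton_iff] at hu ⊢
      exact ⟨fun h => h.2, fun h => ⟨by rw [N.level_succ u w h, hu]; ring, h⟩⟩
    · rw [← hconst w, ← ncard_coe_finset, Finset.coe_bipartiteBelow]
      congr 1
      ext u
      simp only [mem_ofPred_eq, s, t, Finite.mem_toFinset, mem_preimage,
        mem_singleton_iff] at hw ⊢
      exact ⟨fun h => h.2, fun h => ⟨by rw [← hw, N.level_succ u w h]; ring, h⟩⟩
  rw [← ncard_eq_toFinset_card _ (N.level_finite _), ← ncard_eq_toFinset_card _ (N.level_finite _),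
    N.level_ncard, N.level_ncard] at hcount
  exact (Nat.eq_of_mul_eq_mul_left N.pos hcount).symm

lemma inSet_nonempty (v : V) : (inSet E v).Nonempty :=
  nonempty_of_ncard_ne_zero (N.inSet_ncard v ▸ N.prime.ne_zero)

end IsLayeredHAT

def arcOfWord (next : V → Bool → V) (u : V) {k : ℕ} (w : Fin k → Bool) : Fin (k + 1) → V :=
  Fin.induction u fun i x => next x (w i)

lemma arcOfWord_succ (next : V → Bool → V) (u : V) {k : ℕ} (w : Fin k → Bool) (i : Fin k) :
    arcOfWord next u w i.succ = next (arcOfWord next u w i.castSucc) (w i) :=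
  Fin.induction_succ _ _ i

lemma isKArc_arcOfWord {next : V → Bool → V} (hnext : ∀ x b, E x (next x b)) (u : V) {k : ℕ}
    (w : Fin k → Bool) : IsKArc E k (arcOfWord next u w) := fun i => by
  rw [arcOfWord_succ]
  exact hnext _ _

lemma arcOfWord_injective {next : V → Bool → V} (hnext : ∀ x, Injective (next x)) (u : V)
    {k : ℕ} : Injective (arcOfWord next u (k := k)) := fun w w' h => funext fun i =>
  hnext (arcOfWord next u w i.castSucc) <| by
    have hsucc := congrFun h i.succ
    rwa [arcOfWord_succ, arcOfWord_succ, ← h] at hsucc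

theorem HighlyArcTransitive.infinite_vStab (h : HighlyArcTransitive E)
    (hout : ∀ v, (outSet E v).Nontrivial) (u : V) : Infinite (vStab E u) := by
  choose x hx y hy hxy using hout
  let next : V → Bool → V := fun v b => cond b (x v) (y v)
  have hnext : ∀ v b, E v (next v b) := fun v b => by cases b; exacts [hy v, hx v]
  have hinj : ∀ v, Injective (next v) := fun v b b' => by
    cases b <;> cases b' <;> simp [next, hxy v, (hxy v).symm]
  rw [← not_finite_iff_infinite]
  intro hfin
  set n := Nat.card (vStab E u)
  have hword : ∀ w : Fin n → Bool, ∃ g : vStab E u, ∀ i,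
      ((g : autGroup E) : Equiv.Perm V) (arcOfWord next u (fun _ => false) i) =
        arcOfWord next u w i := by
    intro w
    obtain ⟨a, ha, hf⟩ := h n _ _ (isKArc_arcOfWord hnext u _) (isKArc_arcOfWord hnext u w)
    exact ⟨⟨⟨a, ha⟩, hf 0⟩, hf⟩
  choose g hg using hword
  have hg_inj : Injective g := fun w w' hww' =>
    arcOfWord_injective hinj u (funext fun i => by rw [← hg w i, ← hg w' i, hww'])
  have hcard := Nat.card_le_card_of_injective g hg_inj
  have h2n : 2 ^ n ≤ n := by simpa using hcard
  exact Nat.lt_two_pow_self.not_ge h2n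

theorem finite_vStab_of_rigid {S : Set V} (hS : S.Finite) {u : V}
    (hmaps : ∀ a ∈ autGroup E, a u = u → MapsTo a S S)
    (hrigid : ∀ a ∈ autGroup E, (∀ x ∈ S, a x = x) → a = 1) : Finite (vStab E u) := by
  have := hS.to_subtype
  refine Finite.of_injective (fun g : vStab E u => (hmaps _ (g : autGroup E).2 g.2).restrict) ?_
  intro g₁ g₂ h
  have hagree : ∀ x ∈ S,
      ((g₁ : autGroup E) : Equiv.Perm V) x = ((g₂ : autGroup E) : Equiv.Perm V) x :=
    fun x hx => congrArg Subtype.val (congrFun h ⟨x, hx⟩)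
  have hone := hrigid (((g₂ : autGroup E) : Equiv.Perm V)⁻¹ * (g₁ : autGroup E))
    (mul_mem (inv_mem (g₂ : autGroup E).2) (g₁ : autGroup E).2)
    fun x hx => by simp [Equiv.Perm.mul_apply, hagree x hx]
  exact Subtype.ext (Subtype.ext (inv_mul_eq_one.1 hone).symm)

lemma apply_eq_self_of_injOn_inSet (hinj : ∀ u, InjOn (inSet E) (outSet E u))
    {a : Equiv.Perm V} (ha : a ∈ autGroup E) {x : V} (hx : (inSet E x).Nonempty)
    (hfix : ∀ y ∈ inSet E x, a y = y) : a x = x := by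
  obtain ⟨u, hu⟩ := hx
  have hau : E u (a x) := hfix u hu ▸ (ha u x).1 hu
  refine hinj u hau hu ?_
  rw [inSet_apply_of_mem_autGroup ha, image_congr hfix, image_id']

lemma apply_eq_self_of_injOn_outSet (hinj : ∀ v, InjOn (outSet E) (inSet E v))
    {a : Equiv.Perm V} (ha : a ∈ autGroup E) {x : V} (hx : (outSet E x).Nonempty)
    (hfix : ∀ y ∈ outSet E x, a y = y) : a x = x :=
  apply_eq_self_of_injOn_inSet (E := swap E) hinj (by rwa [autGroup_swap]) hx hfix

/-- The arcs form a disjoint union of complete bipartite digraphs. -/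
def Difunctional (E : V → V → Prop) : Prop :=
  ∀ u u' v v', E u v → E u' v → E u' v' → E u v'

lemma difunctional_of_inSet_eq
    (h : ∀ u, ∀ v ∈ outSet E u, ∀ v' ∈ outSet E u, inSet E v = inSet E v') :
    Difunctional E := fun u u' v v' huv hu'v hu'v' => by
  have hu : u ∈ inSet E v := huv
  rwa [h u' v hu'v v' hu'v'] at hu

lemma difunctional_of_outSet_eq
    (h : ∀ v, ∀ u ∈ inSet E v, ∀ u' ∈ inSet E v, outSet E u = outSet E u') :
    Difunctional E := fun u u' v v' huv hu'v hu'v' => by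
  have hv' : v' ∈ outSet E u' := hu'v'
  rwa [← h v u huv u' hu'v] at hv'

lemma Difunctional.outSet_eq (hD : Difunctional E) {u u' v : V} (hu : E u v) (hu' : E u' v) :
    outSet E u = outSet E u' :=
  Set.ext fun _ => ⟨hD u' u v _ hu' hu, hD u u' v _ hu hu'⟩

namespace IsLayeredHAT

variable {φ : V → ℤ} {p m : ℕ} (N : IsLayeredHAT E φ p m)
include N

theorem eq_one_of_forall_level_eq_zero (hin : ∀ u, InjOn (inSet E) (outSet E u))
    (hout : ∀ v, InjOn (outSet E) (inSet E v)) {a : Equiv.Perm V} (ha : a ∈ autGroup E)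
    (hfix : ∀ x, φ x = 0 → a x = x) : a = 1 := by
  suffices h : ∀ i x, φ x = i → a x = x from Equiv.ext fun x => h _ x rfl
  intro i
  refine Int.induction_on i hfix (fun i ih x hx => ?_) (fun i ih x hx => ?_)
  · refine apply_eq_self_of_injOn_inSet hin ha (N.inSet_nonempty x) fun y hy => ih y ?_
    have := N.level_succ y x hy
    omega
  · refine apply_eq_self_of_injOn_outSet hout ha (N.outSet_nonempty x) fun y hy => ih y ?_
    have := N.level_succ x y hy
    omega

theorem not_injOn_inSet_and_injOn_outSet :
    ¬ ((∀ u, InjOn (inSet E) (outSet E u)) ∧ ∀ v, InjOn (outSet E) (inSet E v)) := by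
  rintro ⟨hin, hout⟩
  obtain ⟨u, -⟩ := N.level_nonempty 0
  have := N.highlyArcTransitive.infinite_vStab (fun v =>
    (one_lt_ncard_iff_nontrivial_and_finite.1 (N.outSet_ncard v ▸ N.prime.one_lt)).1) u
  have := finite_vStab_of_rigid (N.level_finite 0) (u := u)
    (fun a ha hau x hx =>
      (level_apply_eq_of_apply_eq_self N.connected N.level_succ ha hau x).trans hx)
    (fun _ ha => N.eq_one_of_forall_level_eq_zero hin hout ha)
  exact not_finite (vStab E u)

theorem difunctional : Difunctional E := by
  rcases N.arcTransitive.forall_const_or_forall_injOn N.prime N.outSet_ncard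
    (F := inSet E) fun _ ha => inSet_apply_eq_inSet_apply_iff ha with h | hin
  · exact difunctional_of_inSet_eq h
  rcases N.arcTransitive.swap.forall_const_or_forall_injOn N.prime N.inSet_ncard
    (F := outSet E) fun _ ha => outSet_apply_eq_outSet_apply_iff (by rwa [autGroup_swap] at ha)
    with h | hout
  · exact difunctional_of_outSet_eq h
  exact (N.not_injOn_inSet_and_injOn_outSet ⟨hin, hout⟩).elim

end IsLayeredHAT

lemma exists_int_path (hout : ∀ v, ∃ w, E v w) (hin : ∀ v, ∃ u, E u v) (x : V) :
    ∃ c : ℤ → V, c 0 = x ∧ ∀ i, E (c i) (c (i + 1)) := by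
  choose next hnext using hout
  choose prev hprev using hin
  refine ⟨fun i => if 0 ≤ i then next^[i.toNat] x else prev^[(-i).toNat] x, by simp, fun i => ?_⟩
  rcases lt_trichotomy i (-1) with hi | rfl | hi
  · have hsucc : (-i).toNat = (-(i + 1)).toNat + 1 := by omega
    simp only [show ¬ 0 ≤ i by omega, show ¬ 0 ≤ i + 1 by omega, if_false, hsucc,
      iterate_succ_apply']
    exact hprev _
  · simpa using hprev x
  · have hsucc : (i + 1).toNat = i.toNat + 1 := by omega
    simp only [show 0 ≤ i by omega, show 0 ≤ i + 1 by omega, if_true, hsucc, iterate_succ_apply']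
    exact hnext _

theorem eq_of_level_eq_of_congr {β : Type*} {φ : V → ℤ} (hconn : DConnected E)
    (hφ : ∀ u v, E u v → φ v = φ u + 1) (hout : ∀ v, ∃ w, E v w) (hin : ∀ v, ∃ u, E u v)
    {F : V → β} (hfwd : ∀ a b c d, E a b → E c d → F a = F c → F b = F d)
    (hbwd : ∀ a b c d, E a b → E c d → F b = F d → F a = F c) {x y : V} (hxy : φ x = φ y) :
    F x = F y := by
  obtain ⟨c, hc0, hc⟩ := exists_int_path hout hin x
  suffices h : ∀ z, F z = F (c (φ z - φ x)) by
    rw [h y, ← hxy, sub_self, hc0]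
  intro z
  induction hconn x z with
  | refl => rw [sub_self, hc0]
  | @tail b z _ hbz ih =>
    rcases hbz with hbz | hzb
    · rw [hφ _ _ hbz, show φ b + 1 - φ x = φ b - φ x + 1 by ring]
      exact hfwd _ _ _ _ hbz (hc _) ih
    · have hlevel : φ b - φ x = φ z - φ x + 1 := by rw [hφ _ _ hzb]; ring
      rw [hlevel] at ih
      exact hbwd _ _ _ _ hzb (hc _) ih

lemma exists_equiv_level_neg {φ : V → ℤ} {m : ℕ} (hfin : ∀ i, (φ ⁻¹' {i}).Finite)
    (hcard : ∀ i, (φ ⁻¹' {i}).ncard = m) : ∃ e : V ≃ V, ∀ x, φ (e x) = -φ x := by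
  have hequiv : ∀ i, Nonempty ({x // φ x = i} ≃ {x // φ x = -i}) := fun i => by
    have : Finite {x // φ x = i} := (hfin i).to_subtype
    have : Finite {x // φ x = -i} := (hfin (-i)).to_subtype
    exact Finite.card_eq.1 ((hcard i).trans (hcard (-i)).symm)
  let f := fun i => (hequiv i).some
  refine ⟨(Equiv.sigmaFiberEquiv φ).symm.trans
    ((Equiv.sigmaCongr (Equiv.neg ℤ) f).trans (Equiv.sigmaFiberEquiv φ)), fun x => ?_⟩
  exact (f (φ x) ⟨x, rfl⟩).2

lemma nonempty_relIso_swap_of_level {φ : V → ℤ} (hE : ∀ u v, E u v ↔ φ v = φ u + 1)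
    {e : V ≃ V} (he : ∀ x, φ (e x) = -φ x) : Nonempty (E ≃r swap E) :=
  ⟨⟨e, fun {u v} => by simp only [swap, hE, he]; omega⟩⟩

namespace IsLayeredHAT

variable {φ : V → ℤ} {p m : ℕ} (N : IsLayeredHAT E φ p m)
include N

lemma outSet_eq_inSet
    (hOO : ∀ u, ∀ v ∈ outSet E u, ∀ v' ∈ outSet E u, outSet E v = outSet E v') {u v w : V}
    (huv : E u v) (hvw : E v w) : outSet E u = inSet E w := by
  refine eq_of_subset_of_ncard_le (fun z hz => ?_) ?_ (N.inSet_finite w)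
  · show w ∈ outSet E z
    rwa [hOO u z hz v huv]
  · rw [N.inSet_ncard, N.outSet_ncard]

theorem level_succ_iff_of_outSet_eq
    (hOO : ∀ u, ∀ v ∈ outSet E u, ∀ v' ∈ outSet E u, outSet E v = outSet E v') (u v : V) :
    E u v ↔ φ v = φ u + 1 := by
  refine ⟨N.level_succ u v, fun hv => ?_⟩
  obtain ⟨u', hu'⟩ := N.inSet_nonempty v
  have htwin : outSet E u' = outSet E u := by
    refine eq_of_level_eq_of_congr N.connected N.level_succ N.outSet_nonempty N.inSet_nonempty
      (fun a b c d hab hcd hac => hOO a b hab d (hac ▸ hcd))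
      (fun a b c d hab hcd hbd => ?_) (by have := N.level_succ u' v hu'; omega)
    obtain ⟨w, hbw⟩ := N.outSet_nonempty b
    have had : E a d := by
      show d ∈ outSet E a
      rw [N.outSet_eq_inSet hOO hab hbw]
      show w ∈ outSet E d
      rwa [← hbd]
    exact N.difunctional.outSet_eq had hcd
  show v ∈ outSet E u
  rwa [← htwin]

theorem nonempty_relIso_swap_of_outSet_eq
    (hOO : ∀ u, ∀ v ∈ outSet E u, ∀ v' ∈ outSet E u, outSet E v = outSet E v') :
    Nonempty (E ≃r swap E) :=
  let ⟨_, he⟩ := exists_equiv_level_neg N.level_finite N.level_ncard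
  nonempty_relIso_swap_of_level (N.level_succ_iff_of_outSet_eq hOO) he

end IsLayeredHAT

def outTwinSetoid (E : V → V → Prop) : Setoid V where
  r x y := outSet E x = outSet E y
  iseqv := ⟨fun _ => rfl, Eq.symm, Eq.trans⟩

def twinClass (E : V → V → Prop) (x : V) : Quotient (outTwinSetoid E) :=
  Quotient.mk _ x

def twinQuotient (E : V → V → Prop) :
    Quotient (outTwinSetoid E) → Quotient (outTwinSetoid E) → Prop :=
  Relation.Map E (twinClass E) (twinClass E)

noncomputable def twinQuotientLevel (E : V → V → Prop) (φ : V → ℤ) :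
    Quotient (outTwinSetoid E) → ℤ :=
  fun A => φ A.out

lemma twinClass_eq_twinClass_iff {x y : V} :
    twinClass E x = twinClass E y ↔ outSet E x = outSet E y :=
  Quotient.eq

lemma twinClass_surjective : Surjective (twinClass E) :=
  Quotient.mk_surjective

lemma twinClass_out (A : Quotient (outTwinSetoid E)) : twinClass E A.out = A :=
  Quotient.out_eq A

lemma twinQuotient_twinClass_iff {x : V} {B : Quotient (outTwinSetoid E)} :
    twinQuotient E (twinClass E x) B ↔ ∃ y, E x y ∧ twinClass E y = B := by
  constructor
  · rintro ⟨x', y, hxy, hx, rfl⟩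
    refine ⟨y, ?_, rfl⟩
    show y ∈ outSet E x
    rw [← twinClass_eq_twinClass_iff.1 hx]
    exact hxy
  · rintro ⟨y, hxy, rfl⟩
    exact ⟨x, y, hxy, rfl, rfl⟩

lemma outSet_twinQuotient_twinClass (x : V) :
    outSet (twinQuotient E) (twinClass E x) = twinClass E '' outSet E x :=
  Set.ext fun _ => twinQuotient_twinClass_iff

lemma DConnected.twinQuotient (h : DConnected E) : DConnected (twinQuotient E) := by
  intro A B
  obtain ⟨x, rfl⟩ := twinClass_surjective A
  obtain ⟨y, rfl⟩ := twinClass_surjective B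
  exact (h x y).lift (twinClass E) fun a b hab =>
    hab.imp (fun h => ⟨a, b, h, rfl, rfl⟩) (fun h => ⟨b, a, h, rfl, rfl⟩)

lemma exists_isKArc_twinClass_eq {k : ℕ} {f : Fin (k + 1) → Quotient (outTwinSetoid E)}
    (hf : IsKArc (twinQuotient E) k f) :
    ∃ g : Fin (k + 1) → V, IsKArc E k g ∧ ∀ i, twinClass E (g i) = f i := by
  choose x y hxy hx hy using hf
  let g : Fin (k + 1) → V := Fin.cases (f 0).out y
  have hg : ∀ i, twinClass E (g i) = f i := Fin.cases (twinClass_out _) hy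
  refine ⟨g, fun i => ?_, hg⟩
  show y i ∈ outSet E (g i.castSucc)
  rw [← twinClass_eq_twinClass_iff.1 ((hx i).trans (hg _).symm)]
  exact hxy i

lemma exists_twinQuotient_aut {a : Equiv.Perm V} (ha : a ∈ autGroup E) :
    ∃ b ∈ autGroup (twinQuotient E), ∀ x, b (twinClass E x) = twinClass E (a x) := by
  let b : Equiv.Perm (Quotient (outTwinSetoid E)) :=
    Quotient.congr a fun x y => (outSet_apply_eq_outSet_apply_iff ha x y).symm
  have hb : ∀ x, b (twinClass E x) = twinClass E (a x) := fun _ => rfl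
  refine ⟨b, fun A B => ?_, hb⟩
  obtain ⟨x, rfl⟩ := twinClass_surjective A
  obtain ⟨y, rfl⟩ := twinClass_surjective B
  rw [hb, hb, twinQuotient_twinClass_iff, twinQuotient_twinClass_iff]
  constructor
  · rintro ⟨z, hz, hzy⟩
    exact ⟨a z, (ha x z).1 hz, by rw [← hb, ← hb, hzy]⟩
  · rintro ⟨z, hz, hzy⟩
    obtain ⟨z, rfl⟩ := a.surjective z
    exact ⟨z, (ha x z).2 hz, b.injective (by rw [hb, hb, hzy])⟩

lemma HighlyArcTransitive.twinQuotient (h : HighlyArcTransitive E) :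
    HighlyArcTransitive (twinQuotient E) := by
  intro k f g hf hg
  obtain ⟨f', hf', hff'⟩ := exists_isKArc_twinClass_eq hf
  obtain ⟨g', hg', hgg'⟩ := exists_isKArc_twinClass_eq hg
  obtain ⟨a, ha, hfg⟩ := h k f' g' hf' hg'
  obtain ⟨b, hb, hba⟩ := exists_twinQuotient_aut ha
  exact ⟨b, hb, fun i => by rw [← hff', hba, hfg, hgg']⟩

namespace IsLayeredHAT

variable {φ : V → ℤ} {p m : ℕ} (N : IsLayeredHAT E φ p m)
include N

lemma level_eq_of_twinClass_eq {x y : V} (h : twinClass E x = twinClass E y) : φ x = φ y := by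
  obtain ⟨v, hv⟩ := N.outSet_nonempty x
  have hv' : v ∈ outSet E y := twinClass_eq_twinClass_iff.1 h ▸ hv
  have := N.level_succ x v hv
  have := N.level_succ y v hv'
  omega

lemma twinQuotientLevel_twinClass (x : V) : twinQuotientLevel E φ (twinClass E x) = φ x :=
  N.level_eq_of_twinClass_eq (twinClass_out _)

lemma twinQuotientLevel_preimage (i : ℤ) :
    twinQuotientLevel E φ ⁻¹' {i} = twinClass E '' (φ ⁻¹' {i}) := by
  ext A
  obtain ⟨x, rfl⟩ := twinClass_surjective A
  simp only [mem_preimage, mem_singleton_iff, mem_image, N.twinQuotientLevel_twinClass]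
  exact ⟨fun hx => ⟨x, hx, rfl⟩, fun ⟨y, hy, hyx⟩ => N.level_eq_of_twinClass_eq hyx.symm ▸ hy⟩

lemma setOf_twinClass_eq {x w : V} (hxw : E x w) :
    {y | twinClass E y = twinClass E x} = inSet E w := by
  ext y
  rw [mem_ofPred_eq, twinClass_eq_twinClass_iff]
  exact ⟨fun h => (h ▸ hxw : w ∈ outSet E y), fun hy => N.difunctional.outSet_eq hy hxw⟩

-- Each class of out-twins is the in-neighbourhood of a vertex, so it has `p` elements.
lemma twinQuotientLevel_ncard_mul (i : ℤ) :
    (twinQuotientLevel E φ ⁻¹' {i}).ncard * p = m := by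
  classical
  set s := (N.level_finite i).toFinset
  have hfiber : ∀ A ∈ s.image (twinClass E), {y ∈ s | twinClass E y = A}.card = p := by
    intro A hA
    obtain ⟨x, hx, rfl⟩ := Finset.mem_image.1 hA
    obtain ⟨w, hw⟩ := N.outSet_nonempty x
    rw [← N.inSet_ncard w, ← N.setOf_twinClass_eq hw, ← ncard_coe_finset, Finset.coe_filter]
    congr 1
    ext y
    simp only [s, Finite.mem_toFinset, mem_ofPred_eq, and_iff_right_iff_imp]
    exact fun hy => show φ y = i from
      (N.level_eq_of_twinClass_eq hy).trans ((N.level_finite i).mem_toFinset.1 hx)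
  have hcount := Finset.card_eq_sum_card_image (twinClass E) s
  rw [Finset.sum_congr rfl hfiber, Finset.sum_const, smul_eq_mul,
    ← ncard_eq_toFinset_card _ (N.level_finite i), N.level_ncard] at hcount
  rw [hcount, N.twinQuotientLevel_preimage, ← (N.level_finite i).coe_toFinset, ← Finset.coe_image,
    ncard_coe_finset]

theorem twinQuotient (hinj : ∀ u, InjOn (outSet E) (outSet E u)) :
    IsLayeredHAT (twinQuotient E) (twinQuotientLevel E φ) p (m / p) where
  connected := N.connected.twinQuotient
  highlyArcTransitive := N.highlyArcTransitive.twinQuotient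
  prime := N.prime
  outSet_ncard A := by
    obtain ⟨x, rfl⟩ := twinClass_surjective A
    rw [outSet_twinQuotient_twinClass, InjOn.ncard_image
      fun u hu v hv h => hinj x hu hv (twinClass_eq_twinClass_iff.1 h), N.outSet_ncard]
  level_succ A B h := by
    obtain ⟨x, y, hxy, rfl, rfl⟩ := h
    rw [N.twinQuotientLevel_twinClass, N.twinQuotientLevel_twinClass, N.level_succ x y hxy]
  level_ncard i := by
    rw [← N.twinQuotientLevel_ncard_mul i, Nat.mul_div_cancel _ N.prime.pos]
  pos := by
    have h := N.twinQuotientLevel_ncard_mul 0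
    rw [← h, Nat.mul_div_cancel _ N.prime.pos]
    refine Nat.pos_of_ne_zero fun h0 => ?_
    rw [h0, zero_mul] at h
    exact N.pos.ne h

end IsLayeredHAT

section LineDigraph

variable {W W' : Type*}

def lineDigraph (F : W → W → Prop) (a b : {q : W × W // F q.1 q.2}) : Prop :=
  a.1.2 = b.1.1

def RelIso.lineDigraphCongr {F : W → W → Prop} {G : W' → W' → Prop} (e : F ≃r G) :
    lineDigraph F ≃r lineDigraph G where
  toEquiv := (e.toEquiv.prodCongr e.toEquiv).subtypeEquiv fun _ => e.map_rel_iff.symm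
  map_rel_iff' := e.injective.eq_iff

def lineDigraphSwap (F : W → W → Prop) : lineDigraph (swap F) ≃r swap (lineDigraph F) where
  toEquiv := (Equiv.prodComm W W).subtypeEquiv fun _ => Iff.rfl
  map_rel_iff' := eq_comm

theorem lineDigraph_nonempty_relIso_swap {F : W → W → Prop} (h : Nonempty (F ≃r swap F)) :
    Nonempty (lineDigraph F ≃r swap (lineDigraph F)) :=
  h.map fun e => e.lineDigraphCongr.trans (lineDigraphSwap F)

end LineDigraph

theorem Difunctional.nonempty_relIso_lineDigraph (hD : Difunctional E)
    (hin : ∀ v, (inSet E v).Nonempty) (hinj : ∀ u, InjOn (outSet E) (outSet E u)) :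
    Nonempty (E ≃r lineDigraph (twinQuotient E)) := by
  choose w hw using hin
  let θ : V → {q : Quotient (outTwinSetoid E) × Quotient (outTwinSetoid E) //
      twinQuotient E q.1 q.2} :=
    fun v => ⟨(twinClass E (w v), twinClass E v), w v, v, hw v, rfl, rfl⟩
  have hθ : ∀ {u v}, lineDigraph (twinQuotient E) (θ u) (θ v) ↔ E u v := by
    intro u v
    show twinClass E u = twinClass E (w v) ↔ v ∈ outSet E u
    rw [twinClass_eq_twinClass_iff]
    exact ⟨fun h => h ▸ hw v, fun h => hD.outSet_eq h (hw v)⟩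
  have hθ_inj : Injective θ := by
    intro u u' h
    have hw_eq : outSet E (w u) = outSet E (w u') :=
      twinClass_eq_twinClass_iff.1 (congrArg (fun a => a.1.1) h)
    have hu' : u' ∈ outSet E (w u) := hw_eq ▸ hw u'
    exact hinj (w u) (hw u) hu' (twinClass_eq_twinClass_iff.1 (congrArg (fun a => a.1.2) h))
  have hθ_surj : Surjective θ := by
    rintro ⟨⟨A, B⟩, x, y, hxy, hx, hy⟩
    refine ⟨y, Subtype.ext (Prod.ext ?_ hy)⟩
    exact (twinClass_eq_twinClass_iff.2 (hD.outSet_eq (hw y) hxy)).trans hx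
  exact ⟨RelIso.ofSurjective ⟨⟨θ, hθ_inj⟩, hθ⟩ hθ_surj⟩

theorem IsLayeredHAT.nonempty_relIso_swap {φ : V → ℤ} {p m : ℕ} (N : IsLayeredHAT E φ p m) :
    Nonempty (E ≃r swap E) := by
  induction m using Nat.strong_induction_on generalizing V with
  | _ m ih =>
    rcases N.arcTransitive.forall_const_or_forall_injOn N.prime N.outSet_ncard
      (F := outSet E) fun _ ha => outSet_apply_eq_outSet_apply_iff ha with hOO | hinj
    · exact N.nonempty_relIso_swap_of_outSet_eq hOO
    obtain ⟨θ⟩ := N.difunctional.nonempty_relIso_lineDigraph N.inSet_nonempty hinj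
    obtain ⟨e⟩ := lineDigraph_nonempty_relIso_swap
      (ih (m / p) (Nat.div_lt_self N.pos N.prime.one_lt) (N.twinQuotient hinj))
    exact ⟨(θ.trans e).trans θ.swap.symm⟩

theorem two_ended_prime_valency_skew_symmetric_general
    {V : Type*} (E : V → V → Prop)
    (hconn : DConnected E) (hhat : HighlyArcTransitive E)
    (p : ℕ) (hp : p.Prime) (hout : ∀ v : V, (outSet E v).ncard = p)
    (φ : V → ℤ)
    (hhom : ∀ u v : V, E u v → φ v = φ u + 1)
    (m : ℕ) (hm : 2 < m) (hfib : ∀ i : ℤ, (φ ⁻¹' {i}).ncard = m) :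
    ∃ e : V ≃ V, ∀ u v : V, E u v ↔ E (e v) (e u) := by
  obtain ⟨e⟩ := (IsLayeredHAT.mk hconn hhat hp hout hhom hfib (by omega)).nonempty_relIso_swap
  exact ⟨e.toEquiv, fun u v => e.map_rel_iff.symm⟩

/-- A connected two-ended highly-arc-transitive digraph of prime
out-valency with fibre size `m > 2` is skew-symmetric: it is isomorphic to its reverse
digraph. -/
theorem two_ended_prime_valency_skew_symmetric
    {V : Type*} (E : V → V → Prop)
    (hconn : DConnected E) (h2 : TwoEnded E) (hhat : HighlyArcTransitive E)
    (p : ℕ) (hp : p.Prime) (hout : ∀ v : V, (outSet E v).ncard = p)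
    (φ : V → ℤ) (hsurj : Function.Surjective φ)
    (hhom : ∀ u v : V, E u v → φ v = φ u + 1)
    (m : ℕ) (hm : 2 < m) (hfib : ∀ i : ℤ, (φ ⁻¹' {i}).ncard = m) :
    ∃ e : V ≃ V, ∀ u v : V, E u v ↔ E (e v) (e u) :=
  two_ended_prime_valency_skew_symmetric_general E hconn hhat p hp hout φ hhom m hm hfib
end
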